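/- arXiv:2604.06651 — 2 statements merged into one kernel-verified Lean document; each statement's English description precedes it below -/
import Mathlib

section
/- Let X : [0,∞) → ℝ² be continuous, twice continuously differentiable on (0,∞), with X(0) = X₀ and Ẋ(t) → 0 as t → 0⁺, satisfying Ẍ(t) + (3/t)·Ẋ(t) + ∇f_{ε,a}(X(t)) = 0 for all t > 0. Define the angular momentum J(t) = det(X(t), Ẋ(t)) = X₁(t)·Ẋ₂(t) − X₂(t)·Ẋ₁(t). Then J satisfies the torque equation J′(t) = −(3/t)·J(t) + ε·X₂(t)·(X₁(t) − a)₊ for all t > 0. -/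
/-!
Differentiating `J = det(X, Ẋ)` gives `J' = det(X, Ẍ)`, and the equation of motion turns this
into `-(3/t) J - det(X, ∇f(X))`. Since `det(x, v) = ⟪x^⊥, v⟫`, the term `det(x, ∇f(x))` is the
derivative of `f` along the rotation field `x ↦ x^⊥`: it kills the radial part `F(‖x‖)` and
leaves `-ε x₂ (x₁ - a)₊` from the quadratic part. The only analytic input is that `F` is
differentiable on `(0, ∞)`, being the primitive of a density that is continuous there.
-/

/-- `F(0) = 0`, `F(r) = ∫₀^r du/(−log u)` for `0 < r ≤ e⁻²`,
`F(r) = F(e⁻²) + (1/2)(r − e⁻²)` for `r ≥ e⁻²`. -/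
noncomputable def F (r : ℝ) : ℝ :=
  if r ≤ Real.exp (-2) then ∫ u in (0:ℝ)..r, 1 / (-Real.log u)
  else (∫ u in (0:ℝ)..Real.exp (-2), 1 / (-Real.log u)) + (1/2) * (r - Real.exp (-2))

/-- `f_{ε,a}(x₁,x₂) = F(√(x₁²+x₂²)) + (ε/2)·((x₁ − a)₊)²`. -/
noncomputable def feps (ε a : ℝ) (x : EuclideanSpace ℝ (Fin 2)) : ℝ :=
  F (Real.sqrt ((x 0)^2 + (x 1)^2)) + (ε/2) * (max (x 0 - a) 0)^2

open Real Set Filter Topology MeasureTheory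
open scoped RealInnerProductSpace Gradient

/-- On `(0, e⁻²]` this is `1 / (-log u)`, beyond it is the constant `1/2`. -/
noncomputable def Fdensity (u : ℝ) : ℝ := 1 / -log (min u (exp (-2)))

lemma Fdensity_of_le {u : ℝ} (hu : u ≤ exp (-2)) : Fdensity u = 1 / -log u := by
  rw [Fdensity, min_eq_left hu]

lemma Fdensity_of_ge {u : ℝ} (hu : exp (-2) ≤ u) : Fdensity u = 1 / 2 := by
  rw [Fdensity, min_eq_right hu, log_exp]
  norm_num

lemma two_le_neg_log_min {u : ℝ} (hu : 0 < u) : 2 ≤ -log (min u (exp (-2))) := by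
  have : log (min u (exp (-2))) ≤ -2 :=
    (log_le_log (lt_min hu (exp_pos _)) (min_le_right _ _)).trans_eq (log_exp _)
  linarith

lemma continuousAt_Fdensity {u : ℝ} (hu : 0 < u) : ContinuousAt Fdensity u := by
  have hmin : 0 < min u (exp (-2)) := lt_min hu (exp_pos _)
  have hcont : ContinuousAt (fun v => min v (exp (-2))) u := by fun_prop
  exact continuousAt_const.div (hcont.log hmin.ne').neg (by linarith [two_le_neg_log_min hu])

lemma measurable_Fdensity : Measurable Fdensity := by
  unfold Fdensity; fun_prop

lemma norm_Fdensity_le {u : ℝ} (hu : 0 < u) : ‖Fdensity u‖ ≤ 1 / 2 := by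
  have h2 := two_le_neg_log_min hu
  rw [Fdensity, norm_of_nonneg (by positivity)]
  gcongr

lemma intervalIntegrable_Fdensity {b c : ℝ} (hb : 0 ≤ b) (hc : 0 ≤ c) :
    IntervalIntegrable Fdensity volume b c := by
  refine (intervalIntegrable_const (c := (1 / 2 : ℝ))).mono_fun
    measurable_Fdensity.aestronglyMeasurable ?_
  filter_upwards [ae_restrict_mem measurableSet_uIoc] with u hu
  rw [norm_of_nonneg (by norm_num : (0 : ℝ) ≤ 1 / 2)]
  exact norm_Fdensity_le ((le_min hb hc).trans_lt hu.1)

lemma integral_Fdensity_of_le {r : ℝ} (h0 : 0 ≤ r) (hr : r ≤ exp (-2)) :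
    ∫ u in (0 : ℝ)..r, Fdensity u = ∫ u in (0 : ℝ)..r, 1 / -log u :=
  intervalIntegral.integral_congr fun _ hu =>
    Fdensity_of_le ((uIcc_of_le h0 ▸ hu).2.trans hr)

lemma F_eq_integral_Fdensity {r : ℝ} (hr : 0 ≤ r) : F r = ∫ u in (0 : ℝ)..r, Fdensity u := by
  rw [F]
  split_ifs with h
  · exact (integral_Fdensity_of_le hr h).symm
  · have he : exp (-2) ≤ r := (not_le.mp h).le
    rw [← intervalIntegral.integral_add_adjacent_intervals
        (intervalIntegrable_Fdensity le_rfl (exp_pos _).le)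
        (intervalIntegrable_Fdensity (exp_pos _).le hr),
      integral_Fdensity_of_le (exp_pos _).le le_rfl,
      intervalIntegral.integral_congr (g := fun _ => (1 / 2 : ℝ))
        fun u hu => Fdensity_of_ge (uIcc_of_le he ▸ hu).1,
      intervalIntegral.integral_const, smul_eq_mul]
    ring

lemma hasDerivAt_F {r : ℝ} (hr : 0 < r) : HasDerivAt F (Fdensity r) r :=
  (intervalIntegral.integral_hasDerivAt_right (intervalIntegrable_Fdensity le_rfl hr.le)
      measurable_Fdensity.stronglyMeasurable.stronglyMeasurableAtFilter
      (continuousAt_Fdensity hr)).congr_of_eventuallyEq <| by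
    filter_upwards [Ioi_mem_nhds hr] with s hs using F_eq_integral_Fdensity (le_of_lt hs)

theorem HasDerivAt.hasFDerivAt_comp_norm {E : Type*} [NormedAddCommGroup E]
    [InnerProductSpace ℝ E] {g : ℝ → ℝ} {g' : ℝ} {x : E} (hg : HasDerivAt g g' ‖x‖)
    (hx : x ≠ 0) : HasFDerivAt (fun y => g ‖y‖) ((g' / ‖x‖) • innerSL ℝ x) x := by
  have hx' : 0 < ‖x‖ := norm_pos_iff.mpr hx
  have hnorm := (hasStrictFDerivAt_norm_sq x).hasFDerivAt.sqrt (by positivity)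
  simp only [sqrt_sq (norm_nonneg _)] at hnorm
  refine (hg.comp_hasFDerivAt x hnorm).congr_fderiv ?_
  ext v
  simp only [smul_apply, coe_innerSL_apply, nsmul_eq_mul, Nat.cast_ofNat, smul_eq_mul]
  field_simp

theorem hasDerivAt_max_zero_sq (u : ℝ) : HasDerivAt (fun v => max v 0 ^ 2) (2 * max u 0) u := by
  refine hasDerivAt_of_hasDerivAt_of_ne' (f := fun v => max v 0 ^ 2) (g := fun v => 2 * max v 0)
    (x := 0) (fun y hy => ?_) (by fun_prop) (by fun_prop) u
  rcases hy.lt_or_gt with hy | hy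
  · rw [max_eq_right hy.le, mul_zero]
    refine (hasDerivAt_const y 0).congr_of_eventuallyEq ?_
    filter_upwards [Iio_mem_nhds hy] with v (hv : v < 0)
    simp [max_eq_right hv.le]
  · rw [max_eq_left hy.le]
    have hsq : HasDerivAt (fun v : ℝ => v ^ 2) (2 * y) y := by simpa using hasDerivAt_pow 2 y
    refine hsq.congr_of_eventuallyEq ?_
    filter_upwards [Ioi_mem_nhds hy] with v (hv : 0 < v)
    simp [max_eq_left hv.le]

lemma feps_eq (ε a : ℝ) (x : EuclideanSpace ℝ (Fin 2)) :
    feps ε a x = F ‖x‖ + ε / 2 * max (x 0 - a) 0 ^ 2 := by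
  simp [feps, EuclideanSpace.norm_eq, Fin.sum_univ_two]

theorem hasFDerivAt_feps (ε a : ℝ) {x : EuclideanSpace ℝ (Fin 2)} (hx : x ≠ 0) :
    HasFDerivAt (feps ε a) ((Fdensity ‖x‖ / ‖x‖) • innerSL ℝ x
      + (ε * max (x 0 - a) 0) • EuclideanSpace.proj (𝕜 := ℝ) (0 : Fin 2)) x := by
  have hrad := (hasDerivAt_F (norm_pos_iff.mpr hx)).hasFDerivAt_comp_norm hx
  have hcoord : HasFDerivAt (fun y : EuclideanSpace ℝ (Fin 2) => y 0 - a)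
      (EuclideanSpace.proj (𝕜 := ℝ) (0 : Fin 2)) x :=
    ((EuclideanSpace.proj (0 : Fin 2) (𝕜 := ℝ)).hasFDerivAt (x := x)).sub_const a
  have hquad := ((hasDerivAt_max_zero_sq (x 0 - a)).comp_hasFDerivAt x hcoord).const_mul (ε / 2)
  rw [show feps ε a = fun y => F ‖y‖ + ε / 2 * max (y 0 - a) 0 ^ 2 from funext (feps_eq ε a)]
  refine (hrad.add hquad).congr_fderiv ?_
  rw [smul_smul]
  congr 2
  ring

def det (x y : EuclideanSpace ℝ (Fin 2)) : ℝ := x 0 * y 1 - x 1 * y 0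

noncomputable def rot (x : EuclideanSpace ℝ (Fin 2)) : EuclideanSpace ℝ (Fin 2) := !₂[-x 1, x 0]

section det

variable (x y z : EuclideanSpace ℝ (Fin 2))

@[simp] lemma det_self : det x x = 0 := by
  simp only [det]; ring

@[simp] lemma det_sub_right : det x (y - z) = det x y - det x z := by
  simp only [det, PiLp.sub_apply]; ring

@[simp] lemma det_smul_right (c : ℝ) : det x (c • y) = c * det x y := by
  simp only [det, PiLp.smul_apply, smul_eq_mul]; ring

lemma det_eq_inner_rot : det x y = ⟪rot x, y⟫ := by
  simp [det, rot, PiLp.inner_apply, Fin.sum_univ_two]; ring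

lemma inner_rot_self : ⟪x, rot x⟫ = 0 := by
  simp [rot, PiLp.inner_apply, Fin.sum_univ_two]; ring

lemma det_gradient (f : EuclideanSpace ℝ (Fin 2) → ℝ) :
    det x (∇ f x) = fderiv ℝ f x (rot x) := by
  rw [det_eq_inner_rot, real_inner_comm, inner_gradient_left]

end det

theorem HasDerivAt.det {x y : ℝ → EuclideanSpace ℝ (Fin 2)} {x' y' : EuclideanSpace ℝ (Fin 2)}
    {t : ℝ} (hx : HasDerivAt x x' t) (hy : HasDerivAt y y' t) :
    HasDerivAt (fun s => det (x s) (y s)) (det x' (y t) + det (x t) y') t := by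
  have coord : ∀ {z : ℝ → EuclideanSpace ℝ (Fin 2)} {z'} (i : Fin 2),
      HasDerivAt z z' t → HasDerivAt (fun s => z s i) (z' i) t :=
    fun i hz => (EuclideanSpace.proj i (𝕜 := ℝ)).hasFDerivAt.comp_hasDerivAt t hz
  exact (((coord 0 hx).mul (coord 1 hy)).sub ((coord 1 hx).mul (coord 0 hy))).congr_deriv
    (by simp only [_root_.det]; ring)

theorem det_gradient_feps (ε a : ℝ) (x : EuclideanSpace ℝ (Fin 2)) :
    det x (∇ (feps ε a) x) = -(ε * x 1 * max (x 0 - a) 0) := by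
  rcases eq_or_ne x 0 with rfl | hx
  · simp [det]
  rw [det_gradient, (hasFDerivAt_feps ε a hx).fderiv]
  simp only [add_apply, smul_apply, coe_innerSL_apply, inner_rot_self, PiLp.proj_apply,
    smul_eq_mul]
  simp only [rot, Matrix.cons_val_zero]
  ring

theorem angular_momentum_torque_equation_general (a ε : ℝ)
    (X X' X'' : ℝ → EuclideanSpace ℝ (Fin 2))
    (hX' : ∀ t > (0:ℝ), HasDerivAt X (X' t) t)
    (hX'' : ∀ t > (0:ℝ), HasDerivAt X' (X'' t) t)
    (hODE : ∀ t > (0:ℝ), X'' t + (3 / t) • X' t + gradient (feps ε a) (X t) = 0)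
    (J : ℝ → ℝ) (hJ : ∀ t, J t = X t 0 * X' t 1 - X t 1 * X' t 0) :
    ∀ t > (0:ℝ),
      HasDerivAt J (-(3 / t) * J t + ε * X t 1 * max (X t 0 - a) 0) t := by
  intro t ht
  obtain rfl : J = fun s => det (X s) (X' s) := funext hJ
  have hacc : X'' t = -(3 / t) • X' t - ∇ (feps ε a) (X t) := by
    linear_combination (norm := module) hODE t ht
  convert (hX' t ht).det (hX'' t ht) using 1
  rw [det_self, hacc, det_sub_right, det_smul_right, det_gradient_feps]
  ring

/-- along a solution `X` of the Nesterov flow for `f_{ε,a}`, the angular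
momentum `J(t) = X₁(t)·Ẋ₂(t) − X₂(t)·Ẋ₁(t)` satisfies
`J′(t) = −(3/t)·J(t) + ε·X₂(t)·(X₁(t) − a)₊` for all `t > 0`. -/
theorem angular_momentum_torque_equation (a ε : ℝ) (ha : 0 < a) (hε : 0 < ε)
    (X₀ : EuclideanSpace ℝ (Fin 2)) (X X' X'' : ℝ → EuclideanSpace ℝ (Fin 2))
    (hXcont : ContinuousOn X (Set.Ici 0))
    (hX' : ∀ t > (0:ℝ), HasDerivAt X (X' t) t)
    (hX'' : ∀ t > (0:ℝ), HasDerivAt X' (X'' t) t)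
    (hX''cont : ContinuousOn X'' (Set.Ioi 0))
    (hX0 : X 0 = X₀)
    (hX'0 : Filter.Tendsto X' (nhdsWithin 0 (Set.Ioi 0)) (nhds 0))
    (hODE : ∀ t > (0:ℝ), X'' t + (3 / t) • X' t + gradient (feps ε a) (X t) = 0)
    (J : ℝ → ℝ) (hJ : ∀ t, J t = X t 0 * X' t 1 - X t 1 * X' t 0) :
    ∀ t > (0:ℝ),
      HasDerivAt J (-(3 / t) * J t + ε * X t 1 * max (X t 0 - a) 0) t :=
  angular_momentum_torque_equation_general a ε X X' X'' hX' hX'' hODE J hJ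
end

section
/- Let λ > 0 and a ∈ ℝ, and let y : [0,∞) → ℝ be continuous, twice continuously differentiable on (0,∞), with y(0) = a and ẏ(t) → 0 as t → 0⁺, satisfying ÿ(t) + (3/t)·ẏ(t) + λ·y(t) = 0 for all t > 0. Then ∫₀^∞ |ẏ(t)| dt < ∞. -/
/-!
Along a solution, the energy
`E(t) = t³/8 · ẏ² + 3/8 · (t + 1/λ)(t ẏ + 2y)² + (λt³/2 + 3t(t - 2)/8) · y²`
satisfies `E' = 3/4 · (1 - t) · y²`, so it is nonincreasing on `[1, ∞)`. For `t ≥ 2` all three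
terms of `E` are nonnegative, hence `t³ ẏ(t)² ≤ 8 E(2)` and `|ẏ(t)| = O(t^(-3/2))`, which is
integrable at infinity. Near `0`, `ẏ` is continuous up to the endpoint because `ẏ(0⁺) = 0`.
-/

open Set Filter Topology MeasureTheory

section Integrability

variable {E : Type*} [NormedAddCommGroup E] {f : ℝ → E}

theorem integrableOn_Ioc_of_continuousOn_of_tendsto {a b : ℝ} {l : E}
    (hf : ContinuousOn f (Ioc a b)) (ha : Tendsto f (𝓝[>] a) (𝓝 l)) :
    IntegrableOn f (Ioc a b) := by
  classical
  have hcont : ContinuousOn (Function.update f a l) (Icc a b) := by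
    rw [continuousOn_update_iff, Icc_sdiff_left]
    exact ⟨hf, fun _ => ha.mono_left (nhdsWithin_mono _ Ioc_subset_Ioi_self)⟩
  refine (hcont.integrableOn_Icc.mono_set Ioc_subset_Icc_self).congr_fun (fun t ht => ?_)
    measurableSet_Ioc
  exact Function.update_of_ne ht.1.ne' _ _

theorem integrableOn_Ioi_of_tendsto_of_norm_le_rpow {l : E} {C p t₀ : ℝ}
    (hf : ContinuousOn f (Ioi 0)) (h0 : Tendsto f (𝓝[>] 0) (𝓝 l)) (ht₀ : 0 < t₀) (hp : p < -1)
    (hbound : ∀ t > t₀, ‖f t‖ ≤ C * t ^ p) :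
    IntegrableOn f (Ioi 0) := by
  rw [← Ioc_union_Ioi_eq_Ioi ht₀.le]
  refine (integrableOn_Ioc_of_continuousOn_of_tendsto (hf.mono Ioc_subset_Ioi_self) h0).union ?_
  refine ((integrableOn_Ioi_rpow_of_lt hp ht₀).const_mul C).mono' ?_ ?_
  · exact (hf.mono (Ioi_subset_Ioi ht₀.le)).aestronglyMeasurable measurableSet_Ioi
  · exact (ae_restrict_iff' measurableSet_Ioi).2 (Eventually.of_forall hbound)

end Integrability

noncomputable def nesterovEnergy (lam : ℝ) (y y' : ℝ → ℝ) (t : ℝ) : ℝ :=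
  t ^ 3 / 8 * y' t ^ 2 + 3 / 8 * (t + 1 / lam) * (t * y' t + 2 * y t) ^ 2
    + (lam * t ^ 3 / 2 + 3 * t * (t - 2) / 8) * y t ^ 2

section NesterovEnergy

variable {lam : ℝ} {y y' y'' : ℝ → ℝ}

theorem hasDerivAt_nesterovEnergy {t : ℝ} (hlam : lam ≠ 0) (ht : t ≠ 0)
    (hy : HasDerivAt y (y' t) t) (hy' : HasDerivAt y' (y'' t) t)
    (hODE : y'' t + 3 / t * y' t + lam * y t = 0) :
    HasDerivAt (nesterovEnergy lam y y') (3 / 4 * (1 - t) * y t ^ 2) t := by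
  have hid := hasDerivAt_id' (x := t)
  have h := ((((hasDerivAt_pow 3 t).div_const 8).mul (hy'.pow 2)).add
    ((((hid.add_const (1 / lam)).const_mul (3 / 8)).mul
      ((hid.mul hy').add (hy.const_mul 2) |>.pow 2)))).add
    ((((((hasDerivAt_pow 3 t).const_mul lam).div_const 2).add
      (((hid.const_mul 3).mul (hid.sub_const 2)).div_const 8)).mul (hy.pow 2)))
  refine h.congr_deriv ?_
  simp only [Pi.pow_apply, Pi.mul_apply, Pi.add_apply]
  rw [show y'' t = -(3 / t * y' t) - lam * y t by linear_combination hODE]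
  field_simp
  ring

theorem nesterovEnergy_antitoneOn (hlam : lam ≠ 0) (hy : ∀ t > 0, HasDerivAt y (y' t) t)
    (hy' : ∀ t > 0, HasDerivAt y' (y'' t) t)
    (hODE : ∀ t > 0, y'' t + 3 / t * y' t + lam * y t = 0) :
    AntitoneOn (nesterovEnergy lam y y') (Ici 1) := by
  have hE : ∀ t ≥ (1 : ℝ), HasDerivAt (nesterovEnergy lam y y') (3 / 4 * (1 - t) * y t ^ 2) t :=
    fun t ht => have ht0 : 0 < t := by linarith
      hasDerivAt_nesterovEnergy hlam ht0.ne' (hy t ht0) (hy' t ht0) (hODE t ht0)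
  refine antitoneOn_of_hasDerivWithinAt_nonpos (convex_Ici 1)
    (fun t ht => (hE t ht).continuousAt.continuousWithinAt)
    (fun t ht => (hE t (interior_subset ht)).hasDerivWithinAt) (fun t ht => ?_)
  rw [interior_Ici] at ht
  have : 0 ≤ (t - 1) * y t ^ 2 := mul_nonneg (sub_nonneg.2 ht.le) (sq_nonneg _)
  linarith

theorem pow_three_mul_sq_le_nesterovEnergy (hlam : 0 < lam) {t : ℝ} (ht : 2 ≤ t) :
    t ^ 3 * y' t ^ 2 ≤ 8 * nesterovEnergy lam y y' t := by
  have ht0 : 0 < t := by linarith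
  have : 0 ≤ 3 / 8 * (t + 1 / lam) * (t * y' t + 2 * y t) ^ 2 := by positivity
  have : 0 ≤ (lam * t ^ 3 / 2 + 3 * t * (t - 2) / 8) * y t ^ 2 := by
    have : 0 ≤ t - 2 := by linarith
    positivity
  unfold nesterovEnergy
  linarith

theorem abs_deriv_le_rpow_of_nesterov (hlam : 0 < lam) (hy : ∀ t > 0, HasDerivAt y (y' t) t)
    (hy' : ∀ t > 0, HasDerivAt y' (y'' t) t)
    (hODE : ∀ t > 0, y'' t + 3 / t * y' t + lam * y t = 0) {t : ℝ} (ht : 2 < t) :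
    |y' t| ≤ √(8 * nesterovEnergy lam y y' 2) * t ^ (-(3 / 2) : ℝ) := by
  have ht0 : 0 < t := by linarith
  have hdecr : t ^ 3 * y' t ^ 2 ≤ 8 * nesterovEnergy lam y y' 2 :=
    (pow_three_mul_sq_le_nesterovEnergy hlam ht.le).trans <| by
      gcongr
      exact nesterovEnergy_antitoneOn hlam.ne' hy hy' hODE (mem_Ici.2 one_le_two)
        (mem_Ici.2 (by linarith)) ht.le
  have hE₂ : 0 ≤ 8 * nesterovEnergy lam y y' 2 :=
    le_trans (by positivity) (pow_three_mul_sq_le_nesterovEnergy hlam le_rfl)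
  refine abs_le_of_sq_le_sq ?_ (by positivity)
  have hpow : (t ^ (-(3 / 2) : ℝ)) ^ 2 = (t ^ 3)⁻¹ := by
    rw [← Real.rpow_mul_natCast ht0.le, ← Real.rpow_natCast, ← Real.rpow_neg ht0.le]
    norm_num
  rw [mul_pow, Real.sq_sqrt hE₂, hpow, ← div_eq_mul_inv, le_div_iff₀ (by positivity)]
  linarith

end NesterovEnergy

theorem scalar_quadratic_nesterov_flow_rectifiable_general (lam : ℝ) (hlam : 0 < lam)
    (y y' y'' : ℝ → ℝ)
    (hy' : ∀ t > (0:ℝ), HasDerivAt y (y' t) t)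
    (hy'' : ∀ t > (0:ℝ), HasDerivAt y' (y'' t) t)
    (hy'0 : Filter.Tendsto y' (nhdsWithin 0 (Set.Ioi 0)) (nhds 0))
    (hODE : ∀ t > (0:ℝ), y'' t + (3 / t) * y' t + lam * y t = 0) :
    (∫⁻ t in Set.Ioi (0:ℝ), ENNReal.ofReal |y' t|) < ⊤ := by
  have hcont : ContinuousOn y' (Ioi 0) := fun t ht => (hy'' t ht).continuousAt.continuousWithinAt
  have hint : IntegrableOn y' (Ioi 0) :=
    integrableOn_Ioi_of_tendsto_of_norm_le_rpow hcont hy'0 two_pos (by norm_num)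
      fun _ ht => abs_deriv_le_rpow_of_nesterov hlam hy' hy'' hODE ht
  exact (hasFiniteIntegral_iff_norm y').1 hint.hasFiniteIntegral

/-- for `λ > 0`, any solution of the scalar critical Nesterov flow
`ÿ(t) + (3/t)·ẏ(t) + λ·y(t) = 0` with `y(0) = a` and `ẏ(0⁺) = 0` satisfies
`∫₀^∞ |ẏ(t)| dt < ∞`. -/
theorem scalar_quadratic_nesterov_flow_rectifiable (lam a : ℝ) (hlam : 0 < lam)
    (y y' y'' : ℝ → ℝ)
    (hycont : ContinuousOn y (Set.Ici 0))
    (hy' : ∀ t > (0:ℝ), HasDerivAt y (y' t) t)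
    (hy'' : ∀ t > (0:ℝ), HasDerivAt y' (y'' t) t)
    (hy''cont : ContinuousOn y'' (Set.Ioi 0))
    (hy0 : y 0 = a)
    (hy'0 : Filter.Tendsto y' (nhdsWithin 0 (Set.Ioi 0)) (nhds 0))
    (hODE : ∀ t > (0:ℝ), y'' t + (3 / t) * y' t + lam * y t = 0) :
    (∫⁻ t in Set.Ioi (0:ℝ), ENNReal.ofReal |y' t|) < ⊤ :=
  scalar_quadratic_nesterov_flow_rectifiable_general lam hlam y y' y'' hy' hy'' hy'0 hODE
end
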